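/- arXiv:2208.06200 — 5 statements merged into one kernel-verified Lean document; each statement's English description precedes it below -/
import Mathlib

section
/- The constant-zero sequence is the unique non-synchronizing point of the even shift: a point x ∈ X_even contains no synchronizing word if and only if x_n = 0 for all n ∈ ℤ. -/
/-- `w` occurs as a (contiguous) factor of the bi-infinite sequence `x`. -/
def IsFactor {A : Type*} (w : List A) (x : ℤ → A) : Prop :=
  ∃ k : ℤ, ∀ i : Fin w.length, x (k + (i : ℕ)) = w.get i

/-- The language of a shift space `X ⊆ A^ℤ`: all finite words occurring in elements of `X`. -/
def Lang {A : Type*} (X : Set (ℤ → A)) : Set (List A) :=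
  {w | ∃ x ∈ X, IsFactor w x}

/-- The context of a word `w` relative to a language `L`:
`E(w) = {(a,b) : a ++ w ++ b ∈ L}`. -/
def Ctx {A : Type*} (L : Set (List A)) (w : List A) : Set (List A × List A) :=
  {p | p.1 ++ w ++ p.2 ∈ L}

/-- `w` is a synchronizing word for the language `L`: whenever `u ++ w ∈ L` and
`w ++ v ∈ L`, also `u ++ w ++ v ∈ L`. -/
def SyncWord {A : Type*} (L : Set (List A)) (w : List A) : Prop :=
  ∀ u v : List A, u ++ w ∈ L → w ++ v ∈ L → u ++ w ++ v ∈ L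

/-- The even shift: binary bi-infinite sequences avoiding all words `1 0^{2k+1} 1`. -/
def evenShift : Set (ℤ → Fin 2) :=
  {x | ∀ k : ℕ, ¬ IsFactor ((1 : Fin 2) :: (List.replicate (2 * k + 1) 0 ++ [1])) x}

/-
A single `1` synchronizes: the `1` in the middle of a forbidden word `1 0^{2k+1} 1` can only be
one of its two ends, so two points of the even shift having a `1` at the same place can be cut
there and glued. Hence every point containing a `1` has a synchronizing factor. Conversely, the
factors of the zero sequence are the blocks `0^n`, and `1 0^m` and `0^n 1` are both allowed
while `1 0^m 0^n 1` is not once `m + n` is odd.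
-/

open List

def IsFactorAt {A : Type*} (w : List A) (x : ℤ → A) (k : ℤ) : Prop :=
  ∀ i : Fin w.length, x (k + (i : ℕ)) = w.get i

section IsFactorAt

variable {A : Type*} {u v w : List A} {a : A} {x y : ℤ → A} {k : ℤ}

theorem IsFactorAt.isFactor (h : IsFactorAt w x k) : IsFactor w x := ⟨k, h⟩

theorem isFactorAt_iff_getElem :
    IsFactorAt w x k ↔ ∀ (i : ℕ) (hi : i < w.length), x (k + i) = w[i] :=
  ⟨fun h i hi => h ⟨i, hi⟩, fun h i => h i i.isLt⟩

theorem IsFactorAt.congr (h : IsFactorAt w x k)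
    (hxy : ∀ i < w.length, x (k + i) = y (k + i)) : IsFactorAt w y k := by
  rw [isFactorAt_iff_getElem] at h ⊢
  exact fun i hi => (hxy i hi).symm.trans (h i hi)

theorem isFactorAt_append :
    IsFactorAt (u ++ v) x k ↔ IsFactorAt u x k ∧ IsFactorAt v x (k + u.length) := by
  simp only [isFactorAt_iff_getElem, length_append]
  constructor
  · intro h
    refine ⟨fun i hi => by rw [h i (by omega), getElem_append_left hi], fun i hi => ?_⟩
    rw [add_assoc, ← Nat.cast_add, h _ (by omega), getElem_append_right (by omega)]
    simp
  · rintro ⟨hu, hv⟩ i hi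
    rcases lt_or_ge i u.length with hiu | hiu
    · rw [hu i hiu, getElem_append_left hiu]
    · have := hv (i - u.length) (by omega)
      rw [getElem_append_right hiu, ← this]
      congr 1
      omega

theorem isFactorAt_singleton : IsFactorAt [a] x k ↔ x k = a := by
  simp [isFactorAt_iff_getElem]

theorem isFactorAt_cons : IsFactorAt (a :: w) x k ↔ x k = a ∧ IsFactorAt w x (k + 1) := by
  rw [← singleton_append, isFactorAt_append, isFactorAt_singleton, length_singleton,
    Nat.cast_one]

theorem isFactorAt_replicate {n : ℕ} :
    IsFactorAt (replicate n a) x k ↔ ∀ i < n, x (k + i) = a := by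
  simp [isFactorAt_iff_getElem]

theorem isFactorAt_comp_add (c : ℤ) :
    IsFactorAt w (fun n => x (n + c)) k ↔ IsFactorAt w x (k + c) := by
  simp only [IsFactorAt, add_right_comm]

theorem isFactor_comp_add (c : ℤ) : IsFactor w (fun n => x (n + c)) ↔ IsFactor w x :=
  ⟨fun ⟨k, h⟩ => ((isFactorAt_comp_add c).1 h).isFactor,
    fun ⟨k, h⟩ => ⟨k - c, (isFactorAt_comp_add c).2 (by rwa [sub_add_cancel])⟩⟩

theorem IsFactor.eq_replicate (h : IsFactor w x) (hx : ∀ n, x n = a) :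
    w = replicate w.length a := by
  obtain ⟨k, h : IsFactorAt w x k⟩ := h
  rw [isFactorAt_iff_getElem] at h
  exact ext_getElem (by simp) fun i hi _ => by rw [← h i hi, hx, getElem_replicate]

end IsFactorAt

def evenForbidden (k : ℕ) : List (Fin 2) := 1 :: (replicate (2 * k + 1) 0 ++ [1])

theorem mem_evenShift {x : ℤ → Fin 2} : x ∈ evenShift ↔ ∀ k, ¬ IsFactor (evenForbidden k) x :=
  Iff.rfl

theorem evenForbidden_not_mem_lang (k : ℕ) : evenForbidden k ∉ Lang evenShift :=
  fun ⟨_, hx, hf⟩ => hx k hf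

theorem comp_add_mem_evenShift {x : ℤ → Fin 2} (hx : x ∈ evenShift) (c : ℤ) :
    (fun n => x (n + c)) ∈ evenShift := by
  simpa only [mem_evenShift, isFactor_comp_add] using hx

theorem evenForbidden_eq_append {k r : ℕ} (hr : r ≤ 2 * k) :
    evenForbidden k = (1 :: replicate r 0) ++ (0 :: (replicate (2 * k - r) 0 ++ [1])) := by
  rw [evenForbidden, show 2 * k + 1 = r + (2 * k - r + 1) by omega, replicate_add,
    replicate_succ]
  simp

theorem glue_mem_evenShift {x y : ℤ → Fin 2} (hx : x ∈ evenShift) (hy : y ∈ evenShift)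
    (hx0 : x 0 = 1) (hy0 : y 0 = 1) : (fun n => if n ≤ 0 then x n else y n) ∈ evenShift := by
  set z : ℤ → Fin 2 := fun n => if n ≤ 0 then x n else y n
  have hzx : ∀ n ≤ 0, z n = x n := fun n hn => if_pos hn
  have hzy : ∀ n ≥ 0, z n = y n := by
    intro n hn
    rcases hn.lt_or_eq with hn | rfl
    · exact if_neg (not_le.2 hn)
    · exact (hzx 0 le_rfl).trans (hx0.trans hy0.symm)
  rintro k ⟨m, hm : IsFactorAt (evenForbidden k) z m⟩
  have hlen : (evenForbidden k).length = 2 * k + 3 := by simp [evenForbidden]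
  by_cases hleft : m + (2 * k + 2) ≤ 0
  · exact hx k ⟨m, hm.congr fun i hi => hzx _ (by rw [hlen] at hi; omega)⟩
  by_cases hright : 0 ≤ m
  · exact hy k ⟨m, hm.congr fun i hi => hzy _ (by rw [hlen] at hi; omega)⟩
  -- the cut point `0` lies strictly inside the occurrence, where the forbidden word reads `0`
  obtain ⟨r, hr⟩ : ∃ r : ℕ, m = -(r + 1) := ⟨(-m - 1).toNat, by omega⟩
  rw [evenForbidden_eq_append (k := k) (r := r) (by omega), isFactorAt_append] at hm
  have hz0 : z 0 = 0 := by simpa [hr] using (isFactorAt_cons.1 hm.2).1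
  rw [hzx 0 le_rfl, hx0] at hz0
  exact absurd hz0 (by decide)

theorem syncWord_one : SyncWord (Lang evenShift) [1] := by
  rintro u v ⟨x, hx, k, hu : IsFactorAt (u ++ [1]) x k⟩
    ⟨y, hy, l, hv : IsFactorAt ([1] ++ v) y l⟩
  set x' : ℤ → Fin 2 := fun n => x (n + (k + u.length))
  set y' : ℤ → Fin 2 := fun n => y (n + l)
  have hu' : IsFactorAt (u ++ [1]) x' (-u.length) := by
    rw [isFactorAt_comp_add]
    simpa using hu
  obtain ⟨hu', hx'0⟩ := isFactorAt_append.1 hu'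
  rw [neg_add_cancel, isFactorAt_singleton] at hx'0
  have hv' : IsFactorAt ([1] ++ v) y' 0 := by
    rw [isFactorAt_comp_add, zero_add]
    exact hv
  have hy'0 : y' 0 = 1 := (isFactorAt_cons.1 hv').1
  refine ⟨_, glue_mem_evenShift (comp_add_mem_evenShift hx _) (comp_add_mem_evenShift hy _)
    hx'0 hy'0, IsFactorAt.isFactor (k := -u.length) ?_⟩
  rw [append_assoc, isFactorAt_append, neg_add_cancel]
  constructor
  · exact hu'.congr fun i hi => (if_pos (by omega)).symm
  · refine hv'.congr fun i hi => ?_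
    rcases Nat.eq_zero_or_pos i with rfl | hi0
    · simpa [x'] using hy'0.trans hx'0.symm
    · exact (if_neg (by omega)).symm

def oneAtOrigin : ℤ → Fin 2 := Pi.single 0 1

theorem oneAtOrigin_eq_one_iff {n : ℤ} : oneAtOrigin n = 1 ↔ n = 0 := by
  by_cases hn : n = 0 <;> simp [oneAtOrigin, hn]

theorem oneAtOrigin_of_ne {n : ℤ} (hn : n ≠ 0) : oneAtOrigin n = 0 :=
  Pi.single_eq_of_ne hn _

theorem oneAtOrigin_mem_evenShift : oneAtOrigin ∈ evenShift := by
  rintro k ⟨m, hm : IsFactorAt (evenForbidden k) oneAtOrigin m⟩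
  rw [evenForbidden, isFactorAt_cons, isFactorAt_append, isFactorAt_singleton,
    oneAtOrigin_eq_one_iff, oneAtOrigin_eq_one_iff] at hm
  omega

theorem one_cons_replicate_zero_mem_lang (n : ℕ) : 1 :: replicate n 0 ∈ Lang evenShift := by
  refine ⟨oneAtOrigin, oneAtOrigin_mem_evenShift, 0, isFactorAt_cons.2 ⟨rfl, ?_⟩⟩
  rw [isFactorAt_replicate]
  exact fun i _ => oneAtOrigin_of_ne (by omega)

theorem replicate_zero_append_one_mem_lang (n : ℕ) : replicate n 0 ++ [1] ∈ Lang evenShift := by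
  refine ⟨oneAtOrigin, oneAtOrigin_mem_evenShift, -n, isFactorAt_append.2 ⟨?_, ?_⟩⟩
  · rw [isFactorAt_replicate]
    exact fun i hi => oneAtOrigin_of_ne (by omega)
  · simp [isFactorAt_singleton, oneAtOrigin]

theorem not_syncWord_replicate_zero (n : ℕ) : ¬ SyncWord (Lang evenShift) (replicate n 0) := by
  intro h
  -- pad `0^n` on the left to an odd block of zeros
  have hpad : 2 * (n / 2) + 1 - n + n = 2 * (n / 2) + 1 := by omega
  have hleft : (1 :: replicate (2 * (n / 2) + 1 - n) 0) ++ replicate n 0 ∈ Lang evenShift := by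
    rw [cons_append, ← replicate_add, hpad]
    exact one_cons_replicate_zero_mem_lang _
  have := h _ [1] hleft (replicate_zero_append_one_mem_lang n)
  rw [cons_append, ← replicate_add, hpad, cons_append] at this
  exact evenForbidden_not_mem_lang _ this

theorem even_shift_nonsync_iff_general (x : ℤ → Fin 2) :
    (∀ w : List (Fin 2), IsFactor w x → ¬ SyncWord (Lang evenShift) w) ↔
      ∀ n : ℤ, x n = 0 := by
  constructor
  · intro h n
    by_contra hn
    exact h [1] ⟨n, isFactorAt_singleton.2 (Fin.eq_one_of_ne_zero _ hn)⟩ syncWord_one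
  · intro h0 w hw
    rw [hw.eq_replicate h0]
    exact not_syncWord_replicate_zero _

/-- The constant-zero sequence is the unique non-synchronizing point of the even shift. -/
theorem even_shift_nonsync_iff (x : ℤ → Fin 2) (hx : x ∈ evenShift) :
    (∀ w : List (Fin 2), IsFactor w x → ¬ SyncWord (Lang evenShift) w) ↔
      ∀ n : ℤ, x n = 0 :=
  even_shift_nonsync_iff_general x
end

section
/- In the even shift, for every k ≥ 1 the pair (1, 0) belongs to E(0^{4k-1}) but does not belong to E(0^{2k-1} 1 0^{2k-1}); consequently the homoclinic points x = ...000... and y = ...00.100... (y has a single 1 at index 0 and 0 elsewhere) are not locally conjugate. -/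
/-- The central window `x_{[-N,N]}` of a bi-infinite sequence, as a word of length `2N+1`. -/
def window {A : Type*} (x : ℤ → A) (N : ℕ) : List A :=
  (List.range (2 * N + 1)).map fun i => x ((i : ℤ) - (N : ℤ))

/-- Two points of a shift space are locally conjugate iff for some `N` they agree outside
`[-N,N]` and their central windows have equal contexts. -/
def LocallyConjugate {A : Type*} (X : Set (ℤ → A)) (x y : ℤ → A) : Prop :=
  ∃ N : ℕ, (∀ n : ℤ, (N : ℤ) < |n| → x n = y n) ∧
    Ctx (Lang X) (window x N) = Ctx (Lang X) (window y N)

/-! Every word `1 0^m` occurs in the point with a single `1`, while `1 0^n 1` with `n` odd is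
forbidden. Prefixing the central window of width `2N + 1` by `1 0^r` with `r + N` odd therefore
yields a legal word for the all-zero point and a forbidden one for the single-`1` point, so the
contexts of the windows differ for every `N`. -/

def delta : ℤ → Fin 2 := fun n => if n = 0 then 1 else 0

lemma IsFactor.of_append {A : Type*} {u v : List A} {x : ℤ → A} (h : IsFactor (u ++ v) x) :
    IsFactor u x := by
  obtain ⟨k, hk⟩ := h
  refine ⟨k, fun i => ?_⟩
  simpa [List.getElem_append_left i.isLt] using hk ⟨i, by simp; omega⟩

lemma eq_zero_of_delta_eq_one {n : ℤ} (h : delta n = 1) : n = 0 := by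
  by_contra hn
  simp [delta, hn] at h

lemma delta_mem_evenShift : delta ∈ evenShift := by
  rintro k ⟨j, hj⟩
  have h₀ : j = 0 := by simpa using eq_zero_of_delta_eq_one (hj ⟨0, by simp⟩)
  have h₁ : j + (2 * k + 2 : ℕ) = 0 :=
    eq_zero_of_delta_eq_one (by simpa [List.getElem_append_right] using hj ⟨2 * k + 2, by simp⟩)
  omega

lemma one_cons_replicate_zero_mem_lang_s8 (m : ℕ) :
    (1 :: List.replicate m 0 : List (Fin 2)) ∈ Lang evenShift := by
  refine ⟨delta, delta_mem_evenShift, 0, fun ⟨i, hi⟩ => ?_⟩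
  cases i with
  | zero => simp [delta]
  | succ t => simp [delta, show (t : ℤ) + 1 ≠ 0 by omega]

lemma one_cons_replicate_odd_not_mem_lang {n : ℕ} (hn : Odd n) (r : List (Fin 2)) :
    (1 :: (List.replicate n 0 ++ 1 :: r) : List (Fin 2)) ∉ Lang evenShift := by
  obtain ⟨a, rfl⟩ := hn
  rintro ⟨x, hx, hf⟩
  refine hx a (IsFactor.of_append (v := r) ?_)
  simpa using hf

lemma window_eq_map {A : Type*} (x : ℤ → A) (N : ℕ) :
    window x N = (List.range (2 * N + 1)).map fun i : ℕ => x (i - N) := by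
  -- `window` coerces `List.range` to `List ℤ` through the list monad.
  change List.map _ ((List.range _).flatMap (pure ∘ Nat.cast)) = _
  rw [List.flatMap_pure_eq_map, List.map_map]
  rfl

lemma window_zero (N : ℕ) : window (fun _ => (0 : Fin 2)) N = List.replicate (2 * N + 1) 0 := by
  simp [window_eq_map]

lemma window_delta (N : ℕ) : window delta N = List.replicate N 0 ++ 1 :: List.replicate N 0 := by
  refine List.ext_getElem (by simp [window_eq_map, two_mul, add_assoc]) fun i hi _ => ?_
  simp only [window_eq_map, List.getElem_map, List.getElem_range, delta]
  rcases lt_trichotomy i N with h | rfl | h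
  · rw [if_neg (by omega), List.getElem_append_left (by simpa using h)]
    simp
  · simp
  · rw [if_neg (by omega), List.getElem_append_right (by simp; omega)]
    simp [List.getElem_cons, show i - N ≠ 0 by omega]

lemma one_zero_mem_ctx_replicate_zero (n : ℕ) :
    ([1], [0]) ∈ Ctx (Lang evenShift) (List.replicate n (0 : Fin 2)) := by
  simpa [Ctx, List.replicate_succ'] using one_cons_replicate_zero_mem_lang_s8 (n + 1)

lemma one_zero_not_mem_ctx_of_odd {n : ℕ} (hn : Odd n) (m : ℕ) :
    ([1], [0]) ∉ Ctx (Lang evenShift)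
      (List.replicate n (0 : Fin 2) ++ [1] ++ List.replicate m 0) := by
  simpa [Ctx] using one_cons_replicate_odd_not_mem_lang hn (List.replicate m 0 ++ [0])

lemma ctx_window_zero_ne_ctx_window_delta (N : ℕ) :
    Ctx (Lang evenShift) (window (fun _ => 0) N) ≠ Ctx (Lang evenShift) (window delta N) := by
  intro h
  obtain ⟨r, hodd⟩ : ∃ r, Odd (r + N) := ⟨N + 1, by simp [parity_simps]⟩
  have hmem : (1 :: List.replicate r 0, []) ∈ Ctx (Lang evenShift) (window (fun _ => 0) N) := by
    simpa [Ctx, window_zero, List.replicate_add] using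
      one_cons_replicate_zero_mem_lang_s8 (r + (2 * N + 1))
  rw [h] at hmem
  refine one_cons_replicate_odd_not_mem_lang hodd (List.replicate N 0) ?_
  simpa [Ctx, window_delta, ← List.append_assoc] using hmem

/-- In the even shift, `(1,0) ∈ E(0^{4k-1})` but `(1,0) ∉ E(0^{2k-1} 1 0^{2k-1})` for all
`k ≥ 1`; consequently the homoclinic points `...000...` and `...00.100...` are not
locally conjugate. -/
theorem even_shift_homoclinic_not_lc :
    (∀ k : ℕ, 1 ≤ k →
      ([1], [0]) ∈ Ctx (Lang evenShift) (List.replicate (4 * k - 1) (0 : Fin 2)) ∧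
      ([1], [0]) ∉ Ctx (Lang evenShift)
        (List.replicate (2 * k - 1) (0 : Fin 2) ++ [1] ++
          List.replicate (2 * k - 1) (0 : Fin 2))) ∧
    ¬ LocallyConjugate evenShift (fun _ => (0 : Fin 2))
      (fun n => if n = 0 then (1 : Fin 2) else 0) := by
  refine ⟨fun k hk => ⟨one_zero_mem_ctx_replicate_zero _, ?_⟩, ?_⟩
  · exact one_zero_not_mem_ctx_of_odd ⟨k - 1, by omega⟩ _
  · rintro ⟨N, -, hctx⟩
    exact ctx_window_zero_ne_ctx_window_delta N hctx
end

section
/- In the even shift, for every k ≥ 1, E⁺(1^k 0^{k+1}) ≠ E⁺(1^{k+1} 0^k), where E⁺(w) = {b ∈ L(X) : wb ∈ L(X)} is the right context. Hence the stably equivalent synchronizing points x = ...111.0000... and y = ...111.1000... are not stably locally conjugate. -/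
/-- The right context `E⁺(w) = {b : w ++ b ∈ L}`. -/
def CtxR {A : Type*} (L : Set (List A)) (w : List A) : Set (List A) :=
  {b | w ++ b ∈ L}

/-- Two synchronizing points are stably locally conjugate iff for some `N` both central
windows are synchronizing, the points agree to the right of `N`, and the windows have
equal right contexts. -/
def StablyLocallyConjugate {A : Type*} (X : Set (ℤ → A)) (x y : ℤ → A) : Prop :=
  ∃ N : ℕ, SyncWord (Lang X) (window x N) ∧ SyncWord (Lang X) (window y N) ∧
    (∀ n : ℤ, (N : ℤ) < n → x n = y n) ∧
    CtxR (Lang X) (window x N) = CtxR (Lang X) (window y N)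

/- ### Auxiliary lemmas -/

lemma isFactor_infix {A : Type*} {u w : List A} {x : ℤ → A} (h : IsFactor w x)
    (s t : List A) (hw : w = s ++ u ++ t) : IsFactor u x := by
  obtain ⟨k, hk⟩ := h
  refine ⟨k + s.length, ?_⟩
  intro i
  have hi := i.isLt
  have hlen : s.length + (i : ℕ) < w.length := by
    subst hw; simp [List.length_append]; omega
  have h1 := hk ⟨s.length + (i : ℕ), hlen⟩
  have h2 : w.get ⟨s.length + (i : ℕ), hlen⟩ = u.get i := by
    subst hw
    simp [List.get_eq_getElem, List.getElem_append, hi]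
  rw [h2] at h1
  rw [← h1]
  congr 1
  push_cast
  ring

/-- The point `...000 1^a 0^b 1 000...` (ones at positions `[0,a)` and at `a+b`). -/
def evenPt (a b : ℕ) : ℤ → Fin 2 := fun n => if (0 ≤ n ∧ n < a) ∨ n = a + b then 1 else 0

lemma evenPt_mem (a b : ℕ) (hb : Even b) : evenPt a b ∈ evenShift := by
  intro k ⟨j, hj⟩
  obtain ⟨c, hc⟩ := hb
  set w : List (Fin 2) := (1 : Fin 2) :: (List.replicate (2 * k + 1) 0 ++ [1]) with hw
  have hlen : w.length = 2 * k + 3 := by simp [hw]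
  have h0 : evenPt a b (j + (0:ℕ)) = 1 := by
    have := hj ⟨0, by omega⟩; simpa [hw] using this
  have h1 : evenPt a b (j + (1:ℕ)) = 0 := by
    have := hj ⟨1, by omega⟩
    simpa [hw, List.getElem_cons, List.getElem_append, List.getElem_replicate] using this
  have hlast : evenPt a b (j + (2*k+2:ℕ)) = 1 := by
    have := hj ⟨2*k+2, by omega⟩
    have he : w.get ⟨2*k+2, by omega⟩ = 1 := by
      simp [hw, List.get_eq_getElem, List.getElem_cons, List.getElem_append]
    rw [he] at this; exact this
  have pt_one : ∀ n : ℤ, evenPt a b n = 1 → (0 ≤ n ∧ n < a) ∨ n = a + b := by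
    intro n hn
    by_contra h
    simp [evenPt, h] at hn
  have pt_zero : ∀ n : ℤ, evenPt a b n = 0 → ¬((0 ≤ n ∧ n < a) ∨ n = a + b) := by
    intro n hn h
    simp [evenPt, h] at hn
  have c0 := pt_one _ h0
  have c1 := pt_zero _ h1
  have cl := pt_one _ hlast
  push_cast at c0 c1 cl
  omega

lemma word_mem_lang (a b : ℕ) (hb : Even b) :
    (List.replicate a (1 : Fin 2) ++ List.replicate b 0 ++ [1]) ∈ Lang evenShift := by
  refine ⟨evenPt a b, evenPt_mem a b hb, 0, ?_⟩
  intro i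
  have hi := i.isLt
  simp only [List.length_append, List.length_replicate, List.length_singleton] at hi
  rw [zero_add, List.get_eq_getElem]
  rcases lt_or_ge (i : ℕ) a with h | h
  · rw [List.getElem_append_left (by simp [List.length_append]; omega),
      List.getElem_append_left (by simpa using h), List.getElem_replicate]
    simp [evenPt]; omega
  · rcases lt_or_ge (i : ℕ) (a + b) with h2 | h2
    · rw [List.getElem_append_left (by simp; omega),
        List.getElem_append_right (by simpa using h), List.getElem_replicate]
      simp [evenPt]
      constructor
      · omega
      · intro hh; exfalso; omega
    · have : (i : ℕ) = a + b := by omega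
      rw [List.getElem_append_right (by simp; omega)]
      simp [evenPt, this]

lemma word_not_mem_lang (u v : List (Fin 2)) (c : ℕ) :
    (u ++ ((1 : Fin 2) :: (List.replicate (2 * c + 1) 0 ++ [1])) ++ v) ∉ Lang evenShift := by
  rintro ⟨x, hx, hf⟩
  exact hx c (isFactor_infix hf u v rfl)

lemma ctx_ne (k : ℕ) (hk : 1 ≤ k) :
    CtxR (Lang evenShift) (List.replicate k (1 : Fin 2) ++ List.replicate (k + 1) 0) ≠
    CtxR (Lang evenShift) (List.replicate (k + 1) (1 : Fin 2) ++ List.replicate k 0) := by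
  intro hctx
  rcases Nat.even_or_odd k with ⟨c, hc⟩ | ⟨c, hc⟩
  · -- k even : `w2 ++ [1]` is legal, `w1 ++ [1]` is forbidden (`1 0^{k+1} 1`, `k+1` odd)
    have hmem : [1] ∈ CtxR (Lang evenShift)
        (List.replicate (k + 1) (1 : Fin 2) ++ List.replicate k 0) :=
      word_mem_lang (k + 1) k ⟨c, by omega⟩
    rw [← hctx] at hmem
    have hmem' : List.replicate k (1 : Fin 2) ++ List.replicate (k + 1) 0 ++ [1] ∈
        Lang evenShift := hmem
    have heq : List.replicate k (1 : Fin 2) ++ List.replicate (k + 1) 0 ++ [1] =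
        List.replicate (k - 1) (1 : Fin 2) ++
          ((1 : Fin 2) :: (List.replicate (2 * c + 1) 0 ++ [1])) ++ [] := by
      have hk1 : k = (k - 1) + 1 := by omega
      have h01 : k + 1 = 2 * c + 1 := by omega
      rw [h01, hk1, List.replicate_succ' (n := k - 1) (a := (1 : Fin 2))]
      simp
    rw [heq] at hmem'
    exact word_not_mem_lang _ _ c hmem'
  · -- k odd : `w1 ++ [1]` is legal, `w2 ++ [1]` is forbidden (`1 0^k 1`)
    have hmem : [1] ∈ CtxR (Lang evenShift)
        (List.replicate k (1 : Fin 2) ++ List.replicate (k + 1) 0) :=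
      word_mem_lang k (k + 1) ⟨c + 1, by omega⟩
    rw [hctx] at hmem
    have hmem' : List.replicate (k + 1) (1 : Fin 2) ++ List.replicate k 0 ++ [1] ∈
        Lang evenShift := hmem
    have heq : List.replicate (k + 1) (1 : Fin 2) ++ List.replicate k 0 ++ [1] =
        List.replicate k (1 : Fin 2) ++
          ((1 : Fin 2) :: (List.replicate (2 * c + 1) 0 ++ [1])) ++ [] := by
      have h01 : k = 2 * c + 1 := by omega
      rw [List.replicate_succ' (n := k) (a := (1 : Fin 2)), h01]
      simp
    rw [heq] at hmem'
    exact word_not_mem_lang _ _ c hmem'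

lemma flatMap_singleton_map {α β : Type*} (f : α → β) (l : List α) :
    (l.flatMap fun a => [f a]) = l.map f := by
  induction l with
  | nil => rfl
  | cons h t ih => rw [List.flatMap_cons, List.map_cons, ih]; rfl

lemma window_eq {A : Type*} (x : ℤ → A) (N : ℕ) :
    window x N = (List.range (2 * N + 1)).map (fun i : ℕ => x ((i : ℤ) - N)) := by
  simp only [window, List.pure_def, List.bind_eq_flatMap, flatMap_singleton_map, List.map_map]
  rfl

lemma window_split (x : ℤ → Fin 2) (N m : ℕ) (hm : m ≤ 2 * N + 1)
    (h1 : ∀ i : ℕ, i < m → x ((i : ℤ) - N) = 1)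
    (h0 : ∀ i : ℕ, m ≤ i → i < 2 * N + 1 → x ((i : ℤ) - N) = 0) :
    window x N = List.replicate m (1 : Fin 2) ++ List.replicate (2 * N + 1 - m) 0 := by
  apply List.ext_getElem
  · rw [window_eq, List.length_map, List.length_range, List.length_append,
      List.length_replicate, List.length_replicate]
    omega
  · intro i hi1 hi2
    rw [window_eq, List.length_map, List.length_range] at hi1
    simp only [window_eq, List.getElem_map, List.getElem_range]
    rcases lt_or_ge i m with h | h
    · rw [List.getElem_append_left (by simpa using h), List.getElem_replicate]
      exact h1 i h
    · rw [List.getElem_append_right (by simpa using h), List.getElem_replicate]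
      exact h0 i h hi1

/-- In the even shift, `E⁺(1^k 0^{k+1}) ≠ E⁺(1^{k+1} 0^k)` for all `k ≥ 1`; hence the
stably equivalent synchronizing points `...111.000...` and `...111.1000...` are not
stably locally conjugate. -/
theorem even_shift_not_lcs :
    (∀ k : ℕ, 1 ≤ k →
      CtxR (Lang evenShift) (List.replicate k (1 : Fin 2) ++ List.replicate (k + 1) 0) ≠
      CtxR (Lang evenShift) (List.replicate (k + 1) (1 : Fin 2) ++ List.replicate k 0)) ∧
    ¬ StablyLocallyConjugate evenShift
      (fun n => if n < 0 then (1 : Fin 2) else 0)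
      (fun n => if n ≤ 0 then (1 : Fin 2) else 0) := by
  constructor
  · exact ctx_ne
  · rintro ⟨N, -, -, -, hctx⟩
    have hx : window (fun n : ℤ => if n < 0 then (1 : Fin 2) else 0) N =
        List.replicate N (1 : Fin 2) ++ List.replicate (N + 1) 0 := by
      have := window_split (fun n : ℤ => if n < 0 then (1 : Fin 2) else 0) N N (by omega)
        (fun i hi => by rw [if_pos (by omega)])
        (fun i hi1 hi2 => by rw [if_neg (by omega)])
      simpa [show 2 * N + 1 - N = N + 1 by omega] using this
    have hy : window (fun n : ℤ => if n ≤ 0 then (1 : Fin 2) else 0) N =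
        List.replicate (N + 1) (1 : Fin 2) ++ List.replicate N 0 := by
      have := window_split (fun n : ℤ => if n ≤ 0 then (1 : Fin 2) else 0) N (N + 1) (by omega)
        (fun i hi => by rw [if_pos (by omega)])
        (fun i hi1 hi2 => by rw [if_neg (by omega)])
      simpa [show 2 * N + 1 - (N + 1) = N by omega] using this
    rw [hx, hy] at hctx
    rcases Nat.eq_zero_or_pos N with hN | hN
    · subst hN
      -- windows are [0] and [1]; the word [0,1] distinguishes them
      have hmem : [0, 1] ∈ CtxR (Lang evenShift)
          (List.replicate 0 (1 : Fin 2) ++ List.replicate 1 0) := by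
        show List.replicate 0 (1 : Fin 2) ++ List.replicate 1 0 ++ [0, 1] ∈ Lang evenShift
        have heq : List.replicate 0 (1 : Fin 2) ++ List.replicate 1 0 ++ [0, 1] =
            List.replicate 0 (1 : Fin 2) ++ List.replicate 2 0 ++ [1] := by simp
        rw [heq]
        exact word_mem_lang 0 2 ⟨1, rfl⟩
      rw [hctx] at hmem
      have hmem' : List.replicate (0 + 1) (1 : Fin 2) ++ List.replicate 0 0 ++ [0, 1] ∈
          Lang evenShift := hmem
      have heq : List.replicate (0 + 1) (1 : Fin 2) ++ List.replicate 0 0 ++ [0, 1] =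
          [] ++ ((1 : Fin 2) :: (List.replicate (2 * 0 + 1) 0 ++ [1])) ++ [] := by simp
      rw [heq] at hmem'
      exact word_not_mem_lang _ _ 0 hmem'
    · exact ctx_ne N hN hctx
end

section
/- For n ≥ 1, let q_n(t) = t^{2n+2} − 2 t^{2n} + 1 and let λ_n be the largest real root of q_n greater than 1 (the Perron–Frobenius eigenvalue of A_n). Then √(2n/(n+1)) ≤ λ_n < √2. -/
/-- `q_n(t) = t^{2n+2} - 2 t^{2n} + 1 = (t² - 1) p_n(t)`. -/
def qfun (n : ℕ) (t : ℝ) : ℝ := t ^ (2 * n + 2) - 2 * t ^ (2 * n) + 1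

lemma key_nat (n : ℕ) (hn : 1 ≤ n) : (n+1)^(n+1) ≤ 2^(n+1) * n^n := by
  induction n with
  | zero => omega
  | succ m ih =>
    match m, ih with
    | 0, _ => norm_num
    | 1, _ => norm_num
    | (k+2), ih =>
      set m := k + 2 with hm
      have hm2 : 2 ≤ m := by omega
      have IH := ih (by omega)
      have h1 : (m+2)*m ≤ (m+1)^2 := by nlinarith
      have h2 : (m+2)^2 ≤ 2*(m+1)^2 := by nlinarith
      have h3 : (m+2)^(m+2) * m^m ≤ 2*((m+1)^2)^(m+1) := by
        calc (m+2)^(m+2)*m^m = (m+2)^2 * (((m+2)*m)^m) := by rw [mul_pow]; ring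
          _ ≤ (2*(m+1)^2) * ((m+1)^2)^m := Nat.mul_le_mul h2 (Nat.pow_le_pow_left h1 m)
          _ = 2*((m+1)^2)^(m+1) := by ring
      have h4 : ((m+1)^2)^(m+1) = (m+1)^(m+1)*(m+1)^(m+1) := by
        rw [← pow_mul, ← pow_add]; ring_nf
      have h5 : (m+2)^(m+2) * m^m ≤ (2^(m+2)*(m+1)^(m+1)) * m^m := by
        calc (m+2)^(m+2) * m^m ≤ 2*((m+1)^(m+1)*(m+1)^(m+1)) := by rw [← h4]; exact h3
          _ ≤ 2*((m+1)^(m+1)*(2^(m+1)*m^m)) := by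
              exact Nat.mul_le_mul_left 2 (Nat.mul_le_mul_left _ IH)
          _ = (2^(m+2)*(m+1)^(m+1)) * m^m := by ring
      exact Nat.le_of_mul_le_mul_right h5 (Nat.pow_pos (by omega))

/-- The Perron–Frobenius eigenvalue `λ_n` — the largest real root of `q_n` greater
than `1` — satisfies `√(2n/(n+1)) ≤ λ_n < √2`. -/
theorem lambda_n_bounds (n : ℕ) (hn : 1 ≤ n) (lam : ℝ)
    (h1 : 1 < lam) (hroot : qfun n lam = 0)
    (hmax : ∀ μ : ℝ, 1 < μ → qfun n μ = 0 → μ ≤ lam) :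
    Real.sqrt (2 * n / (n + 1)) ≤ lam ∧ lam < Real.sqrt 2 := by
  have hn1 : (0:ℝ) < (n:ℝ) + 1 := by positivity
  -- upper bound
  have hupper : lam < Real.sqrt 2 := by
    by_contra hle
    push_neg at hle
    have hl2 : 2 ≤ lam ^ 2 := by
      have := Real.sq_sqrt (by norm_num : (2:ℝ) ≥ 0)
      nlinarith [Real.sqrt_nonneg 2]
    have hpos : 0 ≤ lam ^ (2*n) * (lam ^ 2 - 2) :=
      mul_nonneg (pow_nonneg (by linarith) _) (by linarith)
    have : qfun n lam = lam ^ (2*n) * (lam ^ 2 - 2) + 1 := by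
      unfold qfun; ring
    rw [hroot] at this
    linarith
  refine ⟨?_, hupper⟩
  -- lower bound
  set s : ℝ := Real.sqrt (2 * n / (n + 1)) with hs
  have hrnn : (0:ℝ) ≤ 2 * n / (n + 1) := by positivity
  have hs2 : s ^ 2 = 2 * n / (n + 1) := Real.sq_sqrt hrnn
  -- q_n(s) ≤ 0
  have hcast : ((n:ℝ)+1)^(n+1) ≤ 2^(n+1) * (n:ℝ)^n := by
    exact_mod_cast key_nat n hn
  have hkey : (2*(n:ℝ))^(n+1) - 2*(2*(n:ℝ))^n*((n:ℝ)+1) + ((n:ℝ)+1)^(n+1) ≤ 0 := by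
    have e1 : (2*(n:ℝ))^(n+1) = 2^(n+1) * (n:ℝ)^n * n := by
      rw [mul_pow, pow_succ]; ring
    have e2 : (2*(n:ℝ))^n = 2^n * (n:ℝ)^n := by rw [mul_pow]
    rw [e1, e2]
    have : (2:ℝ)*(2^n*(n:ℝ)^n)*((n:ℝ)+1) = 2^(n+1)*(n:ℝ)^n*((n:ℝ)+1) := by
      rw [pow_succ]; ring
    nlinarith [hcast]
  have hq0 : qfun n s ≤ 0 := by
    have hq : qfun n s = (2*(n:ℝ)/((n:ℝ)+1))^(n+1) - 2*(2*(n:ℝ)/((n:ℝ)+1))^n + 1 := by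
      unfold qfun
      rw [show 2*n+2 = 2*(n+1) by ring, pow_mul, pow_mul, hs2]
    rw [hq, div_pow, div_pow]
    have expand : (2*(n:ℝ))^(n+1)/((n:ℝ)+1)^(n+1) - 2*((2*(n:ℝ))^n/((n:ℝ)+1)^n) + 1
        = ((2*(n:ℝ))^(n+1) - 2*(2*(n:ℝ))^n*((n:ℝ)+1) + ((n:ℝ)+1)^(n+1))/((n:ℝ)+1)^(n+1) := by
      field_simp
      ring
    rw [expand]
    exact div_nonpos_of_nonpos_of_nonneg hkey (by positivity)
  -- q_n(√2) = 1
  have hq2 : qfun n (Real.sqrt 2) = 1 := by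
    unfold qfun
    rw [show 2*n+2 = 2*(n+1) by ring, pow_mul, pow_mul,
      Real.sq_sqrt (by norm_num : (0:ℝ) ≤ 2), pow_succ]
    ring
  have hsle : s ≤ Real.sqrt 2 := by
    apply Real.sqrt_le_sqrt
    rw [div_le_iff₀ hn1]
    nlinarith
  -- IVT
  have hcont : ContinuousOn (qfun n) (Set.Icc s (Real.sqrt 2)) := by
    apply Continuous.continuousOn
    unfold qfun
    continuity
  have hmem : (0:ℝ) ∈ Set.Icc (qfun n s) (qfun n (Real.sqrt 2)) := by
    constructor
    · exact hq0
    · rw [hq2]; norm_num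
  obtain ⟨μ, hμmem, hμ⟩ := intermediate_value_Icc hsle hcont hmem
  rcases le_or_gt s 1 with hcase | hcase
  · linarith
  · have : μ ≤ lam := hmax μ (lt_of_lt_of_le hcase hμmem.1) hμ
    linarith [hμmem.1]
end

section
/- Let c > 2 and let X_c be the charge-constrained shift. If x ∈ X_{c−1} ⊆ X_c (i.e., all finite-window sums of x lie in [−(c−1), c−1]), then no finite subword of x is a synchronizing word for X_c. Consequently the set of non-synchronizing points of X_c contains X_{c−1} and is uncountable. -/
/-- The charge-constrained shift `X_c`: `±1`-sequences all of whose finite-window sums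
lie in `[-c, c]`. -/
def chargeShift (c : ℤ) : Set (ℤ → ℤ) :=
  {x | (∀ i : ℤ, x i = 1 ∨ x i = -1) ∧
    ∀ m n : ℤ, m ≤ n → |∑ i ∈ Finset.Icc m n, x i| ≤ c}

/-- The substitution `a ↦ (+1)(-1)`, `b ↦ (-1)(+1)` (with `a = true`, `b = false`),
sending the symbol at index `k` to positions `2k, 2k+1`. -/
def chargeSub (y : ℤ → Bool) : ℤ → ℤ := fun n =>
  if n % 2 = 0 then (if y (n / 2) then 1 else -1) else (if y (n / 2) then -1 else 1)

namespace ChargeAux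


def pre (W : List ℤ) (k : ℕ) : ℤ := (W.take k).sum

lemma pre_succ (W : List ℤ) (j : ℕ) (h : j < W.length) :
    pre W (j+1) = pre W j + W.get ⟨j, h⟩ := by
  unfold pre
  rw [List.take_succ, List.getElem?_eq_getElem h, List.sum_append]
  simp

lemma pre_of_le (W : List ℤ) (t : ℕ) (h : W.length ≤ t) : pre W t = W.sum := by
  unfold pre; rw [List.take_of_length_le h]

lemma pre_length (W : List ℤ) : pre W W.length = W.sum := pre_of_le W _ le_rfl

lemma pre_zero (W : List ℤ) : pre W 0 = 0 := rfl

def padG (W : List ℤ) (n : ℤ) : ℤ :=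
  if n < 0 then (if n % 2 = 0 then 1 else 0)
  else if n < W.length then pre W (n.toNat + 1)
  else W.sum + (if (n - W.length) % 2 = 0 then -1 else 0)

def pad (W : List ℤ) (n : ℤ) : ℤ := padG W n - padG W (n - 1)

lemma padG_neg (W : List ℤ) {n : ℤ} (h : n < 0) :
    padG W n = if n % 2 = 0 then 1 else 0 := by simp [padG, h]

lemma padG_mid (W : List ℤ) {n : ℤ} (h0 : 0 ≤ n) (h1 : n < W.length) :
    padG W n = pre W (n.toNat + 1) := by
  simp [padG, not_lt.mpr h0, h1]

lemma padG_big (W : List ℤ) {n : ℤ} (h : (W.length : ℤ) ≤ n) :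
    padG W n = W.sum + (if (n - W.length) % 2 = 0 then -1 else 0) := by
  have h0 : ¬ n < 0 := by omega
  have h1 : ¬ n < (W.length : ℤ) := by omega
  simp [padG, h0, h1]

lemma pad_middle (W : List ℤ) (i : ℕ) (h : i < W.length) :
    pad W i = W.get ⟨i, h⟩ := by
  have h1 : padG W i = pre W (i + 1) := by
    rw [padG_mid W (by positivity) (by exact_mod_cast h)]
    simp
  rcases Nat.eq_zero_or_pos i with h0 | h0
  · subst h0
    have h2 : padG W ((0:ℤ) - 1) = 0 := by
      rw [padG_neg W (by omega)]
      norm_num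
    unfold pad
    rw [h1, show ((0:ℕ):ℤ) - 1 = (0:ℤ) - 1 by norm_num, h2, pre_succ W 0 h, pre_zero]
    simp
  · have h2 : padG W ((i:ℤ) - 1) = pre W i := by
      rw [padG_mid W (by omega) (by push_cast; omega)]
      congr 1
      omega
    unfold pad
    rw [h1, h2, pre_succ W i h]
    ring

lemma pad_pm (W : List ℤ) (hW : ∀ e ∈ W, e = 1 ∨ e = -1) (n : ℤ) :
    pad W n = 1 ∨ pad W n = -1 := by
  rcases lt_trichotomy n 0 with h | h | h
  all_goals try skip
  · -- n < 0 : both tail values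
    unfold pad
    rw [padG_neg W h, padG_neg W (by omega)]
    rcases Int.emod_emod_of_dvd n (dvd_refl 2) with _
    by_cases hp : n % 2 = 0
    · have : (n-1) % 2 = 1 := by omega
      simp [hp, this]
    · have hp1 : n % 2 = 1 := by omega
      have : (n-1) % 2 = 0 := by omega
      simp [hp1, this]
  · -- n = 0
    subst h
    rcases Nat.eq_zero_or_pos W.length with hL | hL
    · unfold pad
      rw [padG_big W (by omega), padG_neg W (by omega)]
      have : W.sum = 0 := by
        have : W = [] := List.length_eq_zero_iff.mp hL
        simp [this]
      rw [this]
      norm_num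
      omega
    · have := pad_middle W 0 hL
      rw [show ((0:ℕ):ℤ) = (0:ℤ) by norm_num] at this
      rw [this]
      exact hW _ (List.get_mem W _)
  · -- n > 0
    rcases lt_trichotomy n (W.length : ℤ) with h2 | h2 | h2
    · -- middle
      have hn : n = ((n.toNat : ℕ) : ℤ) := by omega
      have hlt : n.toNat < W.length := by omega
      rw [hn, pad_middle W n.toNat hlt]
      exact hW _ (List.get_mem W _)
    · -- n = length > 0
      have hL : 0 < W.length := by omega
      unfold pad
      rw [padG_big W (le_of_eq h2.symm)]
      have h3 : padG W (n - 1) = pre W ((n-1).toNat + 1) := padG_mid W (by omega) (by omega)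
      have h4 : (n-1).toNat + 1 = W.length := by omega
      rw [h3, h4, pre_length]
      have : (n - W.length) % 2 = 0 := by omega
      simp [this]
    · -- n > length : both right tail
      unfold pad
      rw [padG_big W (by omega), padG_big W (by omega)]
      by_cases hp : (n - W.length) % 2 = 0
      · have : (n - 1 - W.length) % 2 = 1 := by omega
        simp [hp, this]
      · have hp1 : (n - W.length) % 2 = 1 := by omega
        have : (n - 1 - W.length) % 2 = 0 := by omega
        simp [hp1, this]


lemma sum_shift (x : ℤ → ℤ) : ∀ (j : ℕ) (m : ℤ),
    ∑ u ∈ Finset.Icc m (m + (j:ℤ) - 1), x u = ∑ t ∈ Finset.range j, x (m + t) := by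
  intro j
  induction j with
  | zero => intro m; rw [Finset.Icc_eq_empty (by omega)]; simp
  | succ j ih =>
    intro m
    have h1 : Finset.Icc m (m + (j+1:ℕ) - 1) = insert (m + j) (Finset.Icc m (m + (j:ℤ) - 1)) := by
      ext u; simp; omega
    rw [h1, Finset.sum_insert (by simp), Finset.sum_range_succ, ih, add_comm]

lemma telescope (G : ℤ → ℤ) : ∀ (j : ℕ) (m : ℤ),
    ∑ t ∈ Finset.range j, (G (m + t) - G (m + t - 1)) = G (m + j - 1) - G (m - 1) := by
  intro j
  induction j with
  | zero => simp
  | succ j ih =>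
    intro m
    rw [Finset.sum_range_succ, ih]
    push_cast
    ring_nf

lemma window_eq (G : ℤ → ℤ) (m n : ℤ) (h : m ≤ n) :
    ∑ u ∈ Finset.Icc m n, (G u - G (u - 1)) = G n - G (m - 1) := by
  have hj : n = m + ((n + 1 - m).toNat : ℤ) - 1 := by omega
  rw [hj, sum_shift (fun u => G u - G (u-1)) _ m, telescope]

section Membership

variable {c : ℤ} {W : List ℤ} (hc : 2 ≤ c)
  (hq : ∀ k, k ≤ W.length → 1 - c ≤ pre W k ∧ pre W k ≤ c)
  (hs : ∀ k, k ≤ W.length → 1 - c ≤ W.sum - pre W k ∧ W.sum - pre W k ≤ c)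
  (hwin : ∀ k l, k ≤ W.length → l ≤ W.length → |pre W k - pre W l| ≤ c)
  (htot : 2 - c ≤ W.sum)

include hc hq hs hwin htot in
lemma padG_bound (a b : ℤ) : |padG W a - padG W b| ≤ c := by
  have hsu : 1 - c ≤ W.sum ∧ W.sum ≤ c := by
    have := hq W.length le_rfl; rwa [pre_length] at this
  have key : ∀ n : ℤ, (∃ k, k ≤ W.length ∧ padG W n = pre W k) ∨
      (0 ≤ padG W n ∧ padG W n ≤ 1) ∨
      (W.sum - 1 ≤ padG W n ∧ padG W n ≤ W.sum) := by
    intro n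
    rcases lt_trichotomy n 0 with h | h | h
    · right; left
      rw [padG_neg W h]
      split_ifs <;> omega
    · subst h
      rcases Nat.eq_zero_or_pos W.length with hL | hL
      · right; right
        rw [padG_big W (by omega)]
        split_ifs <;> omega
      · left
        exact ⟨1, hL, by rw [padG_mid W le_rfl (by exact_mod_cast hL)]; norm_num⟩
    · rcases lt_or_ge n (W.length : ℤ) with h2 | h2
      · left
        exact ⟨n.toNat + 1, by omega, by rw [padG_mid W (by omega) h2]⟩
      · right; right
        rw [padG_big W h2]
        split_ifs <;> omega
  rcases key a with ⟨k, hk, ha⟩ | ha | ha <;> rcases key b with ⟨l, hl, hb⟩ | hb | hb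
  · rw [ha, hb]; exact hwin k l hk hl
  · have := hq k hk; rw [ha, abs_le]; omega
  · have := hs k hk; rw [ha, abs_le]; omega
  · have := hq l hl; rw [hb, abs_le]; omega
  · rw [abs_le]; omega
  · rw [abs_le]; omega
  · have := hs l hl; rw [hb, abs_le]; omega
  · rw [abs_le]; omega
  · rw [abs_le]; omega

include hc hq hs hwin htot in
lemma pad_mem (hW : ∀ e ∈ W, e = 1 ∨ e = -1) : pad W ∈ chargeShift c := by
  constructor
  · exact pad_pm W hW
  · intro m n h
    have heq : ∑ i ∈ Finset.Icc m n, pad W i = padG W n - padG W (m - 1) :=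
      window_eq (padG W) m n h
    rw [heq]
    exact padG_bound hc hq hs hwin htot n (m-1)

include hc hq hs hwin htot in
lemma word_mem (hW : ∀ e ∈ W, e = 1 ∨ e = -1) : W ∈ Lang (chargeShift c) := by
  refine ⟨pad W, pad_mem hc hq hs hwin htot hW, 0, ?_⟩
  intro i
  rw [zero_add, pad_middle W i i.isLt]

end Membership



lemma pre_min (W : List ℤ) (t : ℕ) : pre W t = pre W (min t W.length) := by
  rcases le_or_gt t W.length with h | h
  · rw [min_eq_left h]
  · rw [min_eq_right (le_of_lt h), pre_of_le W t (le_of_lt h), pre_length]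

lemma pre_app (u v : List ℤ) (t : ℕ) : pre (u ++ v) t = pre u t + pre v (t - u.length) := by
  unfold pre
  rw [List.take_append, List.sum_append]

lemma pre_repl (n t : ℕ) : pre (List.replicate n (1:ℤ)) t = (min t n : ℕ) := by
  unfold pre
  rw [List.take_replicate, List.sum_replicate]
  simp

lemma pre_eq_range {x : ℤ → ℤ} {w : List ℤ} {k : ℤ}
    (hf : ∀ i : Fin w.length, x (k + (i : ℕ)) = w.get i) :
    ∀ j, j ≤ w.length → pre w j = ∑ t ∈ Finset.range j, x (k + t) := by
  intro j
  induction j with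
  | zero => intro _; simp [pre]
  | succ j ih =>
    intro h
    have hj : j < w.length := h
    rw [pre_succ w j hj, Finset.sum_range_succ, ih (le_of_lt hj), hf ⟨j, hj⟩]

lemma factor_window {c : ℤ} (hc : 0 ≤ c) {x : ℤ → ℤ} (hx : x ∈ chargeShift c)
    {w : List ℤ} {k : ℤ} (hf : ∀ i : Fin w.length, x (k + (i : ℕ)) = w.get i)
    {i j : ℕ} (hij : i ≤ j) (hj : j ≤ w.length) : |pre w j - pre w i| ≤ c := by
  have h1 := pre_eq_range hf j hj
  have h2 := pre_eq_range hf i (le_trans hij hj)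
  have h3 : pre w j - pre w i = ∑ t ∈ Finset.Ico i j, x (k + t) := by
    rw [h1, h2, ← Finset.sum_Ico_eq_sub _ hij]
  rw [h3, Finset.sum_Ico_eq_sum_range]
  have h4 : ∑ t ∈ Finset.range (j - i), x (k + (i + t : ℕ)) =
      ∑ t ∈ Finset.range (j - i), x ((k + i) + t) := by
    apply Finset.sum_congr rfl; intro t _; congr 1; push_cast; ring
  rw [h4, ← sum_shift]
  rcases Nat.eq_or_lt_of_le hij with h | h
  · rw [Finset.Icc_eq_empty (by omega)]; simpa using hc
  · exact hx.2 _ _ (by omega)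

lemma lang_sum {c : ℤ} (hc : 0 ≤ c) {W : List ℤ} (h : W ∈ Lang (chargeShift c)) :
    |W.sum| ≤ c := by
  obtain ⟨x, hx, k, hf⟩ := h
  have := factor_window hc hx hf (Nat.zero_le W.length) le_rfl
  simpa [pre_length, pre] using this

/-- Main combinatorial step. -/
lemma main1 {c : ℤ} (hc : 2 < c) {x : ℤ → ℤ} (hx : x ∈ chargeShift (c-1))
    {w : List ℤ} (hf : IsFactor w x) : ¬ SyncWord (Lang (chargeShift c)) w := by
  intro hsync
  obtain ⟨k, hk⟩ := hf
  set L := w.length with hL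
  have hW : ∀ e ∈ w, e = 1 ∨ e = -1 := by
    intro e he
    obtain ⟨i, rfl⟩ := List.mem_iff_get.mp he
    rw [← hk i]
    exact hx.1 _
  have hB : ∀ i j : ℕ, |pre w j - pre w i| ≤ c - 1 := by
    have base : ∀ i j : ℕ, i ≤ j → j ≤ L → |pre w j - pre w i| ≤ c - 1 :=
      fun i j hij hj => factor_window (by omega) hx hk hij hj
    intro i j
    rw [pre_min w i, pre_min w j]
    rcases le_total (min i L) (min j L) with h | h
    · exact base _ _ h (min_le_right _ _)
    · rw [abs_sub_comm]; exact base _ _ h (min_le_right _ _)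
  set T := (Finset.range (L+1)).image (pre w) with hT
  have hTne : T.Nonempty := ⟨pre w 0, Finset.mem_image.mpr ⟨0, by simp, rfl⟩⟩
  set m := T.min' hTne with hm
  obtain ⟨t0, _, ht0⟩ : ∃ t0 ∈ Finset.range (L+1), pre w t0 = m :=
    Finset.mem_image.mp (T.min'_mem hTne)
  have hmle : ∀ t : ℕ, m ≤ pre w t := by
    intro t
    rw [pre_min w t]
    exact T.min'_le _ (Finset.mem_image.mpr ⟨min t L, by simp [Nat.lt_succ_iff], rfl⟩)
  have hm0 : m ≤ 0 := by have := hmle 0; rwa [pre_zero] at this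
  have hub : ∀ t : ℕ, pre w t ≤ m + (c - 1) := by
    intro t
    have := hB t0 t
    rw [ht0, abs_le] at this
    omega
  have hmlb : 1 - c ≤ m := by
    have := hB 0 t0
    rw [ht0, pre_zero, abs_le] at this
    omega
  set s := w.sum with hsw
  have hsub : s ≤ m + (c-1) := by have := hub L; rwa [pre_length] at this
  have hsge : m ≤ s := by have := hmle L; rwa [pre_length] at this
  set a := (1 - m).toNat with haa
  have haz : (a:ℤ) = 1 - m := Int.toNat_of_nonneg (by omega)
  set b := (c - s + m).toNat with hbb
  have hbz : (b:ℤ) = c - s + m := Int.toNat_of_nonneg (by omega)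
  set u := List.replicate a (1:ℤ) with hu
  set v := List.replicate b (1:ℤ) with hv
  have hul : u.length = a := List.length_replicate
  have hvl : v.length = b := List.length_replicate
  have hus : u.sum = (a:ℤ) := by rw [hu, List.sum_replicate]; simp
  have hvs : v.sum = (b:ℤ) := by rw [hv, List.sum_replicate]; simp
  -- first word : u ++ w
  have key1 : ∀ t : ℕ, 0 ≤ pre (u ++ w) t ∧ pre (u ++ w) t ≤ c := by
    intro t
    rw [pre_app, hul, hu, pre_repl]
    rcases le_or_gt t a with h | h
    · have h0 : t - a = 0 := by omega
      rw [h0, pre_zero, min_eq_left h]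
      constructor
      · positivity
      · have : (t:ℤ) ≤ (a:ℤ) := by exact_mod_cast h
        omega
    · rw [min_eq_right h.le]
      have h1 := hmle (t - a)
      have h2 := hub (t - a)
      omega
  have hsum1 : (u ++ w).sum = 1 - m + s := by
    rw [List.sum_append, hus, haz, hsw]
  have mem1 : u ++ w ∈ Lang (chargeShift c) := by
    apply word_mem (by omega)
    · intro t _
      have := key1 t
      omega
    · intro t _
      have := key1 t
      rw [hsum1]
      omega
    · intro t t' _ _
      have h1 := key1 t
      have h2 := key1 t'
      rw [abs_le]
      omega
    · rw [hsum1]; omega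
    · intro e he
      rcases List.mem_append.mp he with h | h
      · left; exact List.eq_of_mem_replicate h
      · exact hW e h
  -- second word : w ++ v
  have key2 : ∀ t : ℕ, m ≤ pre (w ++ v) t ∧ pre (w ++ v) t ≤ c + m := by
    intro t
    rw [pre_app, hv, pre_repl, ← hL]
    rcases le_or_gt t L with h | h
    · have h0 : t - L = 0 := by omega
      rw [h0]
      have h1 := hmle t
      have h2 := hub t
      simp only [Nat.zero_min, Nat.cast_zero, add_zero]
      omega
    · rw [pre_of_le w t (by omega)]
      have h1 : ((min (t - L) b : ℕ) : ℤ) ≤ ((b:ℕ):ℤ) := Int.ofNat_le.mpr (min_le_right _ _)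
      have h2 : (0:ℤ) ≤ (min (t - L) b : ℕ) := by positivity
      omega
  have hsum2 : (w ++ v).sum = c + m := by
    rw [List.sum_append, hvs, hbz, ← hsw]
    ring
  have mem2 : w ++ v ∈ Lang (chargeShift c) := by
    apply word_mem (by omega)
    · intro t _
      have := key2 t
      omega
    · intro t _
      have := key2 t
      rw [hsum2]
      omega
    · intro t t' _ _
      have h1 := key2 t
      have h2 := key2 t'
      rw [abs_le]
      omega
    · rw [hsum2]; omega
    · intro e he
      rcases List.mem_append.mp he with h | h
      · exact hW e h
      · left; exact List.eq_of_mem_replicate h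
  have mem3 := hsync u v mem1 mem2
  have hbound := lang_sum (by omega) mem3
  have hsum3 : (u ++ w ++ v).sum = c + 1 := by
    rw [List.append_assoc, List.sum_append, List.sum_append, hus, hvs, haz, hbz, ← hsw]
    ring
  rw [hsum3, abs_le] at hbound
  omega





def subG (y : ℤ → Bool) (n : ℤ) : ℤ :=
  if n % 2 = 0 then (if y (n/2) then 1 else -1) else 0

lemma sub_diff (y : ℤ → Bool) (n : ℤ) : chargeSub y n = subG y n - subG y (n-1) := by
  by_cases h : n % 2 = 0
  · have h1 : ¬ (n-1) % 2 = 0 := by omega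
    simp [chargeSub, subG, h, h1]
  · have h1 : (n-1) % 2 = 0 := by omega
    have h2 : (n-1)/2 = n/2 := by omega
    rw [chargeSub, subG, subG, if_neg h, if_neg h, if_pos h1, h2]
    cases y (n/2) <;> simp

lemma chargeSub_mem {c : ℤ} (hc : 2 < c) (y : ℤ → Bool) :
    chargeSub y ∈ chargeShift (c - 1) := by
  constructor
  · intro i
    unfold chargeSub
    split_ifs <;> simp
  · intro m n h
    have heq : ∑ i ∈ Finset.Icc m n, chargeSub y i =
        ∑ i ∈ Finset.Icc m n, (subG y i - subG y (i-1)) :=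
      Finset.sum_congr rfl (fun i _ => sub_diff y i)
    rw [heq, window_eq (subG y) m n h]
    have b1 : ∀ u : ℤ, -1 ≤ subG y u ∧ subG y u ≤ 1 := by
      intro u
      unfold subG
      split_ifs <;> omega
    have h1 := b1 n
    have h2 := b1 (m-1)
    rw [abs_le]
    omega

lemma chargeSub_inj : Function.Injective chargeSub := by
  intro y y' h
  funext t
  have h2 := congrFun h (2*t)
  have hm : (2*t) % 2 = 0 := by omega
  have hd : (2*t) / 2 = t := by omega
  rw [chargeSub, chargeSub] at h2
  simp only [hm, hd, if_pos] at h2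
  cases hy : y t <;> cases hy' : y' t <;> rw [hy, hy'] at h2 <;> simp_all <;> omega

lemma notCount : ¬ Countable (ℤ → Bool) := by
  intro h
  have h2 : Countable (Set ℤ) :=
    Countable.of_equiv _ (Equiv.arrowCongr (Equiv.refl ℤ) Equiv.propEquivBool).symm
  obtain ⟨f, hf⟩ := (countable_iff_exists_injective (Set ℤ)).mp h2
  refine Function.cantor_injective (fun s => ((f s : ℕ) : ℤ)) (fun a b hab => hf ?_)
  simpa using hab


end ChargeAux

/-- For `c > 2`, no finite subword of a point of `X_{c-1} ⊆ X_c` is a synchronizing word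
for `X_c`; consequently the set of non-synchronizing points of `X_c` contains
`X_{c-1}` and is uncountable. -/
theorem chargeShift_nonsync (c : ℤ) (hc : 2 < c) :
    (∀ x ∈ chargeShift (c - 1), ∀ w : List ℤ, IsFactor w x →
      ¬ SyncWord (Lang (chargeShift c)) w) ∧
    chargeShift (c - 1) ⊆
      {x ∈ chargeShift c | ∀ w : List ℤ, IsFactor w x →
        ¬ SyncWord (Lang (chargeShift c)) w} ∧
    ¬ ({x ∈ chargeShift c | ∀ w : List ℤ, IsFactor w x →
        ¬ SyncWord (Lang (chargeShift c)) w} : Set (ℤ → ℤ)).Countable := by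
  have hsub : chargeShift (c-1) ⊆ chargeShift c := by
    intro x hx
    exact ⟨hx.1, fun m n h => le_trans (hx.2 m n h) (by omega)⟩
  refine ⟨fun x hx w hf => ChargeAux.main1 hc hx hf, ?_, ?_⟩
  · intro x hx
    exact ⟨hsub hx, fun w hf => ChargeAux.main1 hc hx hf⟩
  · intro hcount
    have hsub2 : Set.range chargeSub ⊆
        {x ∈ chargeShift c | ∀ w : List ℤ, IsFactor w x →
          ¬ SyncWord (Lang (chargeShift c)) w} := by
      rintro z ⟨y, rfl⟩
      have hy := ChargeAux.chargeSub_mem hc y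
      exact ⟨hsub hy, fun w hf => ChargeAux.main1 hc hy hf⟩
    have hcr : (Set.range chargeSub).Countable := hcount.mono hsub2
    have hct : Countable (ℤ → Bool) := by
      have := hcr.to_subtype
      exact Countable.of_equiv _ (Equiv.ofInjective _ ChargeAux.chargeSub_inj).symm
    exact ChargeAux.notCount hct
end
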